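/- arXiv:1203.0758 — 4 statements merged into one kernel-verified Lean document; each statement's English description precedes it below -/
import Mathlib

section
/- The ring of S_α-integers of K equals 𝒪[α]: 𝒪_{S_α} = 𝒪[α], where 𝒪[α] is the subring of K generated by 𝒪 and α. -/
/-!
Setup (following Steiner–Thuswaldner, "Rational self-affine tiles"):
`K` is a number field generated over `ℚ` by an expanding algebraic number `α`
whose primitive minimal polynomial is `A ∈ ℤ[X]` (encoded by: `A` irreducible in
`ℤ[X]`, `A(α) = 0`, and every complex root of `A` has absolute value `> 1`).
The representation space is `𝕂_α = 𝕂_∞ × ∏_{𝔭 ∣ 𝔟} K_𝔭`, where `𝕂_∞` is the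
mixed space `ℝ^r × ℂ^s` of `K` and the product runs over the finite places with
`|α|_𝔭 > 1` (the primes dividing the denominator ideal `𝔟` of `α`).
-/

open NumberField MeasureTheory Polynomial IsDedekindDomain Filter Topology Set
open scoped Classical

noncomputable section

variable (K : Type) [Field K] [NumberField K]

/-- The set of finite places dividing the denominator ideal `𝔟` of `α`,
i.e. those with `|α|_𝔭 > 1`. -/
def denomPlaces (α : K) : Set (HeightOneSpectrum (𝓞 K)) :=
  {v | 1 < v.valuation K α}

/-- The archimedean part `𝕂_∞ ≅ ℝ^r × ℂ^s ≅ ℝ^n` of the representation space,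
equipped with its canonical (Lebesgue) volume. -/
abbrev Kinf : Type := NumberField.mixedEmbedding.mixedSpace K

/-- The nonarchimedean part `𝕂_𝔟 = ∏_{𝔭 ∣ 𝔟} K_𝔭` of the representation space. -/
abbrev Kfin (α : K) : Type := Π v : denomPlaces K α, v.1.adicCompletion K

/-- The representation space `𝕂_α = 𝕂_∞ × 𝕂_𝔟`. -/
abbrev KA (α : K) : Type := Kinf K × Kfin K α

/-- The diagonal embedding `Φ_α : K → 𝕂_α`. -/
def PhiA (α : K) (x : K) : KA K α :=
  (mixedEmbedding K x, fun v => algebraMap K (v.1.adicCompletion K) x)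

/-- The diagonal embedding `Φ_𝔟 : K → 𝕂_𝔟`. -/
def PhiB (α : K) (x : K) : Kfin K α :=
  fun v => algebraMap K (v.1.adicCompletion K) x

/-- `ℤ[α]`, the subring of `K` generated by `α`. -/
def Zring (α : K) : Subalgebra ℤ K := Algebra.adjoin ℤ {α}

/-- `ℤ[α⁻¹]`, the subring of `K` generated by `α⁻¹`. -/
def Zinv (α : K) : Subalgebra ℤ K := Algebra.adjoin ℤ {α⁻¹}

/-- `𝒟` is a standard digit set for `α`: a subset of `ℤ[α]` that is a complete
set of representatives of `ℤ[α]/αℤ[α]`. -/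
def IsStandardDigitSet (α : K) (D : Finset K) : Prop :=
  (D : Set K) ⊆ (Zring K α : Set K) ∧
    ∀ x ∈ Zring K α, ∃! d : K, d ∈ D ∧ ∃ y ∈ Zring K α, x - d = α * y

/-- The rational self-affine tile
`𝓕(α,𝒟) = {∑_{k≥1} Φ_α(d_k α^{-k}) : d_k ∈ 𝒟 for all k ≥ 1}`. -/
def Ztile (α : K) (D : Finset K) : Set (KA K α) :=
  {z | ∃ d : ℕ → K, (∀ k, d k ∈ D) ∧
    Tendsto (fun N => ∑ k ∈ Finset.range N, PhiA K α (d k * α⁻¹ ^ (k + 1)))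
      atTop (𝓝 z)}

/-- `𝔷 = ℤ⟨α,𝒟⟩`, the smallest `ℤ`-submodule of `K` containing `𝒟 - 𝒟` and
closed under multiplication by `α`. -/
def zmoduleAD (α : K) (D : Finset K) : Submodule ℤ K :=
  sInf {M : Submodule ℤ K |
    (∀ d ∈ D, ∀ d' ∈ D, (d : K) - d' ∈ M) ∧ ∀ x ∈ M, α * x ∈ M}

/-- `Λ_{α,m} = ℤ[α] ∩ α^{m-1} ℤ[α⁻¹]` as a set. -/
def LambdaSet (α : K) (m : ℤ) : Set K :=
  {x | x ∈ Zring K α ∧ ∃ y ∈ Zinv K α, x = α ^ (m - 1) * y}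

/-- The intersective tile `𝒢(x)`, regarded as a subset of `𝕂_∞`:
`𝒢(x) = {z ∈ 𝕂_∞ | (z,0) ∈ 𝓕 + Φ_α(x)}`. -/
def Gtile (α : K) (D : Finset K) (x : K) : Set (Kinf K) :=
  {z | ((z, 0) : KA K α) - PhiA K α x ∈ Ztile K α D}

/-!
`𝒪[α]` consists of `S_α`-integers because `α` is `𝔭`-integral at every `𝔭 ∉ S_α`. Conversely, for
an `S_α`-integer `x` the ideal of those `t ∈ 𝒪` with `t x ∈ 𝒪[α]` lies in no maximal ideal `𝔭`:
some `α^{-N} x` is `𝔭`-integral (take `N = 0` if `𝔭 ∉ S_α`, and `N` large if `|α|_𝔭 > 1`), so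
`t α^{-N} x ∈ 𝒪` for some `t ∉ 𝔭`, whence `t x ∈ α^N 𝒪 ⊆ 𝒪[α]`.
-/

theorem Submodule.mem_of_forall_isMaximal_exists_smul_mem {R M : Type*} [CommRing R]
    [AddCommGroup M] [Module R M] {N : Submodule R M} {x : M}
    (h : ∀ m : Ideal R, m.IsMaximal → ∃ t ∉ m, t • x ∈ N) : x ∈ N := by
  by_contra hx
  obtain ⟨m, hm, hle⟩ := Ideal.exists_le_maximal (N.comap (LinearMap.toSpanSingleton R M x))
    (by simpa [Ideal.eq_top_iff_one] using hx)
  obtain ⟨t, htm, htx⟩ := h m hm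
  exact htm (hle htx)

theorem Valuation.exists_map_mul_inv_pow_le_one {K Γ : Type*} [Field K]
    [LinearOrderedCommGroupWithZero Γ] [MulArchimedean Γ] (v : Valuation K Γ) {α : K}
    (hα : 1 < v α) (x : K) : ∃ N : ℕ, v (x * α⁻¹ ^ N) ≤ 1 := by
  rcases eq_or_ne x 0 with rfl | hx
  · exact ⟨0, by simp⟩
  have hα_inv : v α⁻¹ < 1 := by rw [map_inv₀]; exact inv_lt_one_of_one_lt₀ hα
  obtain ⟨N, hN⟩ := exists_pow_lt₀ hα_inv (Units.mk0 (v x)⁻¹ (by simpa using hx))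
  refine ⟨N, ?_⟩
  rw [map_mul, map_pow]
  calc v x * v α⁻¹ ^ N ≤ v x * (v x)⁻¹ := by gcongr; exact hN.le
    _ = 1 := mul_inv_cancel₀ (by simpa using hx)

section

variable {R K : Type*} [CommRing R] [IsDedekindDomain R] [Field K] [Algebra R K]
  [IsFractionRing R K]

theorem IsDedekindDomain.HeightOneSpectrum.exists_eq_pow_mul_valuation_le_one {α x : K}
    (hx : x ∈ {v : HeightOneSpectrum R | 1 < v.valuation K α}.integer K)
    (v : HeightOneSpectrum R) : ∃ (N : ℕ) (y : K), v.valuation K y ≤ 1 ∧ x = α ^ N * y := by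
  by_cases hv : 1 < v.valuation K α
  · have hα : α ≠ 0 := by rintro rfl; simp at hv
    obtain ⟨N, hN⟩ := (v.valuation K).exists_map_mul_inv_pow_le_one hv x
    exact ⟨N, _, hN, by rw [mul_left_comm, ← mul_pow, mul_inv_cancel₀ hα, one_pow, mul_one]⟩
  · exact ⟨0, x, hx v hv, by simp⟩

theorem exists_notMem_smul_mem_adjoin_of_mem_integer {α x : K}
    (hx : x ∈ {v : HeightOneSpectrum R | 1 < v.valuation K α}.integer K)
    (m : Ideal R) [hm : m.IsMaximal] : ∃ t ∉ m, t • x ∈ Algebra.adjoin R {α} := by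
  rcases eq_or_ne m ⊥ with rfl | hm_bot
  · obtain ⟨⟨n, d⟩, hnd⟩ := IsLocalization.surj (nonZeroDivisors R) x
    refine ⟨d, nonZeroDivisors.ne_zero d.2, ?_⟩
    rw [Algebra.smul_def, mul_comm, hnd]
    exact Subalgebra.algebraMap_mem _ n
  let v : HeightOneSpectrum R := ⟨m, hm.isPrime, hm_bot⟩
  obtain ⟨N, y, hy, rfl⟩ := v.exists_eq_pow_mul_valuation_le_one hx
  obtain ⟨n, d, hnd⟩ := v.exists_primeCompl_mul_eq_of_integer y hy
  refine ⟨d, d.2, ?_⟩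
  rw [Algebra.smul_def, mul_left_comm, mul_comm _ y, hnd]
  exact mul_mem (pow_mem (Algebra.self_mem_adjoin_singleton R α) N)
    (Subalgebra.algebraMap_mem _ n)

theorem Set.integer_setOf_one_lt_valuation_eq_adjoin (α : K) :
    {v : HeightOneSpectrum R | 1 < v.valuation K α}.integer K = Algebra.adjoin R {α} := by
  refine le_antisymm (fun x hx => ?_) (Algebra.adjoin_le ?_)
  · exact (Algebra.adjoin R {α}).mem_toSubmodule.mp
      (Submodule.mem_of_forall_isMaximal_exists_smul_mem
        fun m _ => exists_notMem_smul_mem_adjoin_of_mem_integer hx m)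
  · rintro _ rfl v hv
    exact not_lt.mp hv

end

theorem sIntegers_eq_adjoin
    (α : K) :
    {x : K | ∀ v : HeightOneSpectrum (𝓞 K), v ∉ denomPlaces K α → v.valuation K x ≤ 1}
      = (Algebra.adjoin (𝓞 K) {α} : Subalgebra (𝓞 K) K) :=
  congrArg SetLike.coe (Set.integer_setOf_one_lt_valuation_eq_adjoin α)
end
end

section
/- The additive group ℤ[α] is a subgroup of finite index of 𝒪[α], and 𝔷 = ℤ⟨α,𝒟⟩ is an additive subgroup of finite index of ℤ[α]. -/
/-!
Setup (following Steiner–Thuswaldner, "Rational self-affine tiles"):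
`K` is a number field generated over `ℚ` by an expanding algebraic number `α`
whose primitive minimal polynomial is `A ∈ ℤ[X]` (encoded by: `A` irreducible in
`ℤ[X]`, `A(α) = 0`, and every complex root of `A` has absolute value `> 1`).
The representation space is `𝕂_α = 𝕂_∞ × ∏_{𝔭 ∣ 𝔟} K_𝔭`, where `𝕂_∞` is the
mixed space `ℝ^r × ℂ^s` of `K` and the product runs over the finite places with
`|α|_𝔭 > 1` (the primes dividing the denominator ideal `𝔟` of `α`).
-/

open NumberField MeasureTheory Polynomial IsDedekindDomain Filter Topology Set
open scoped Classical

noncomputable section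

variable (K : Type) [Field K] [NumberField K]

/-!
Both inclusions are immediate. Since `A` is primitive, `A mod p ≠ 0` for every prime `p`, so
`ℤ[α]/pℤ[α]`, a quotient of `𝔽_p[X]/(A mod p)`, is finite; hence so is `ℤ[α]/Nℤ[α]` for every
`N ≠ 0`. As `K = ℚ(α)`, some integer `m ≠ 0` maps the finitely generated `ℤ[α]`-module `𝒪[α]`
into `ℤ[α]`, and `𝒪[α]/m𝒪[α]` is finite. The module `𝔷` is an ideal of `ℤ[α]` containing
`d₀ - d₁`, where `d₀ ≡ 0` and `d₁ ≡ 1` modulo `α`. This is nonzero because `α` is not a unit of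
`ℤ[α]`: `α g(α) = 1` would make `A` divide `X g - 1`, so `|a₀| = 1`, whereas
`|a₀| = |a_n| ∏ |zᵢ| > 1`. Clearing the denominators of `(d₀ - d₁)⁻¹`, `𝔷` contains some `mℤ[α]`.
-/

theorem Polynomial.IsPrimitive.map_zmod_ne_zero {A : ℤ[X]} (hA : A.IsPrimitive) {p : ℕ}
    (hp : p.Prime) : A.map (Int.castRingHom (ZMod p)) ≠ 0 := by
  intro h
  have : C (p : ℤ) ∣ A := by
    rw [C_dvd_iff_dvd_coeff]
    intro i
    simpa [← ZMod.intCast_zmod_eq_zero_iff_dvd] using congrArg (coeff · i) h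
  exact Nat.prime_iff_prime_int.mp hp |>.not_isUnit (hA _ this)

theorem finite_quotient_span_natCast_of_aeval_eq_zero {R : Type*} [CommRing R] {a : R}
    (ha : Function.Surjective (aeval (R := ℤ) a)) {A : ℤ[X]} (hA : A.IsPrimitive)
    (hAa : aeval a A = 0) (p : ℕ) [hp : Fact p.Prime] :
    Finite (R ⧸ Ideal.span {(p : R)}) := by
  set Ā := A.map (Int.castRingHom (ZMod p))
  have : Module.Finite (ZMod p) (AdjoinRoot Ā) :=
    (AdjoinRoot.powerBasis (hA.map_zmod_ne_zero hp.out)).finite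
  have : Finite (AdjoinRoot Ā) := Module.finite_of_finite (ZMod p)
  let mk := Ideal.Quotient.mk (Ideal.span {(p : R)})
  have hp0 : mk p = 0 := Ideal.Quotient.eq_zero_iff_mem.mpr (Ideal.mem_span_singleton_self _)
  -- not `ZMod.castHom`: `R ⧸ (p)` may be the zero ring, which does not have characteristic `p`
  let ι : ZMod p →+* R ⧸ Ideal.span {(p : R)} :=
    (Ideal.Quotient.lift _ (Int.castRingHom _) fun n hn => by
      obtain ⟨c, rfl⟩ := Ideal.mem_span_singleton'.mp hn
      rw [eq_intCast, Int.cast_mul, Int.cast_natCast, ← map_natCast mk, hp0, mul_zero]).comp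
      (Int.quotientSpanNatEquivZMod p).symm.toRingHom
  have hι : ι.comp (Int.castRingHom (ZMod p)) = mk.comp (algebraMap ℤ R) := RingHom.ext_int _ _
  let φ : AdjoinRoot Ā →+* R ⧸ Ideal.span {(p : R)} :=
    AdjoinRoot.lift ι (mk a) (by rw [eval₂_map, hι, ← hom_eval₂, ← aeval_def, hAa, map_zero])
  let π := (AdjoinRoot.mk Ā).comp (mapRingHom (Int.castRingHom (ZMod p)))
  have hcomp : φ.comp π = mk.comp (aeval a).toRingHom := by
    ext <;> simp [φ, π, mk]
  refine Finite.of_surjective φ (Function.Surjective.of_comp (g := π) ?_)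
  rw [← RingHom.coe_comp, hcomp]
  exact Ideal.Quotient.mk_surjective.comp ha

theorem finite_quotient_span_intCast {R : Type*} [CommRing R]
    (h : ∀ p : ℕ, p.Prime → Finite (R ⧸ Ideal.span {(p : R)})) {N : ℤ} (hN : N ≠ 0) :
    Finite (R ⧸ Ideal.span {(N : R)}) := by
  induction N using UniqueFactorizationMonoid.induction_on_prime with
  | h₁ => exact absurd rfl hN
  | h₂ u hu =>
    have : Subsingleton (R ⧸ Ideal.span {(u : R)}) := Ideal.Quotient.subsingleton_iff.mpr
      (Ideal.span_singleton_eq_top.mpr (hu.map (Int.castRingHom R)))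
    infer_instance
  | h₃ a p ha hp ih =>
    have : Finite (R ⧸ Ideal.span {(p : R)}) := by
      rcases Int.natAbs_eq p with hp' | hp' <;> rw [hp'] <;>
        simpa [Ideal.span_singleton_neg] using h _ (Int.prime_iff_natAbs_prime.mp hp)
    have := ih ha
    rw [Int.cast_mul, ← Ideal.span_singleton_mul_span_singleton]
    exact Submodule.finite_quotient_smul _ (Submodule.fg_span_singleton _)

theorem aeval_adjoin_singleton_surjective {S : Type*} [CommRing S] (α : S) :
    Function.Surjective
      (aeval (R := ℤ) (⟨α, Algebra.self_mem_adjoin_singleton ℤ α⟩ : Algebra.adjoin ℤ {α})) := by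
  rintro ⟨x, hx⟩
  rw [Algebra.adjoin_singleton_eq_range_aeval] at hx
  obtain ⟨g, rfl⟩ := hx
  exact ⟨g, Subtype.ext (by simp [aeval_subalgebra_coe])⟩

theorem finite_quotient_adjoin_span_intCast {S : Type*} [CommRing S] {α : S} {A : ℤ[X]}
    (hA : A.IsPrimitive) (hAα : aeval α A = 0) {N : ℤ} (hN : N ≠ 0) :
    Finite (Algebra.adjoin ℤ {α} ⧸ Ideal.span {(N : Algebra.adjoin ℤ {α})}) :=
  finite_quotient_span_intCast (fun p hp =>
    have : Fact p.Prime := ⟨hp⟩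
    finite_quotient_span_natCast_of_aeval_eq_zero (aeval_adjoin_singleton_surjective α) hA
      (Subtype.ext (by simpa [aeval_subalgebra_coe] using hAα)) p) hN

theorem Submodule.relIndex_ne_zero_of_zsmul_mem {R M : Type*} [CommRing R] [AddCommGroup M]
    [Module R M] {m : ℤ} [Finite (R ⧸ Ideal.span {(m : R)})] {P : Submodule R M} (hP : P.FG)
    {H : AddSubgroup M} (hH : ∀ x ∈ P, m • x ∈ H) : H.relIndex P.toAddSubgroup ≠ 0 := by
  set I := Ideal.span {(m : R)}
  have : Module.Finite R P := .of_fg hP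
  have : Finite (P ⧸ (I • (⊤ : Submodule R P)).toAddSubgroup) :=
    Submodule.finite_quotient_smul I Module.Finite.fg_top
  have e : (I • P).toAddSubgroup.addSubgroupOf P.toAddSubgroup =
      (I • (⊤ : Submodule R P)).toAddSubgroup := by
    ext x
    rw [AddSubgroup.mem_addSubgroupOf, Submodule.mem_toAddSubgroup, Submodule.mem_toAddSubgroup,
      ← Submodule.comap_map_eq_of_injective P.injective_subtype (I • ⊤), Submodule.map_smul'',
      Submodule.map_top, Submodule.range_subtype]
    rfl
  have hsmul : (I • P).toAddSubgroup.relIndex P.toAddSubgroup ≠ 0 := by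
    rw [AddSubgroup.relIndex, e]
    exact AddSubgroup.index_ne_zero_of_finite
  refine ne_zero_of_dvd_ne_zero hsmul (AddSubgroup.relIndex_dvd_of_le_left _ fun x hx => ?_)
  rw [Submodule.mem_toAddSubgroup, Submodule.ideal_span_singleton_smul,
    Submodule.mem_smul_pointwise_iff_exists] at hx
  obtain ⟨y, hy, rfl⟩ := hx
  rw [Int.cast_smul_eq_zsmul]
  exact hH y hy

theorem one_lt_abs_coeff_zero {A : ℤ[X]} (hA : A.natDegree ≠ 0)
    (hroots : ∀ z : ℂ, aeval z A = 0 → 1 < ‖z‖) : 1 < |A.coeff 0| := by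
  set Ac := A.map (Int.castRingHom ℂ)
  have hsplit : Ac.Splits := IsAlgClosed.splits Ac
  have hroots_ne : Ac.roots ≠ 0 := by
    rw [← Multiset.card_pos, ← hsplit.natDegree_eq_card_roots,
      natDegree_map_eq_of_injective (RingHom.injective_int _)]
    omega
  have hprod : 1 < (Ac.roots.map (‖·‖)).prod := by
    simpa using Multiset.prod_map_lt_prod_map hroots_ne (fun _ => (1 : ℝ)) (‖·‖)
      (fun _ _ => one_pos) fun z hz => hroots z <| by
        simpa [aeval_def, eval₂_eq_eval_map] using (mem_roots'.mp hz).2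
  have hlc : (1 : ℝ) ≤ ‖Ac.leadingCoeff‖ := by
    rw [leadingCoeff_map_of_injective (RingHom.injective_int _)]
    simpa using (Int.cast_le (R := ℝ)).mpr <| Int.one_le_abs <|
      leadingCoeff_ne_zero.mpr (ne_zero_of_natDegree_gt (Nat.pos_of_ne_zero hA))
  have hnorm := map_multiset_prod (normHom : ℂ →*₀ ℝ) Ac.roots
  simp only [normHom_apply] at hnorm
  have key : (|A.coeff 0| : ℝ) = ‖Ac.leadingCoeff‖ * (Ac.roots.map (‖·‖)).prod := by
    simpa [Ac, hnorm] using congrArg (‖·‖) hsplit.coeff_zero_eq_leadingCoeff_mul_prod_roots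
  exact_mod_cast key ▸ one_lt_mul_of_le_of_lt hlc hprod

theorem Polynomial.IsPrimitive.dvd_of_aeval_eq_zero {F : Type*} [Field F] [CharZero F]
    {A B : ℤ[X]} (hA : A.IsPrimitive) (hAirr : Irreducible A) {x : F} (hAx : aeval x A = 0)
    (hBx : aeval x B = 0) : A ∣ B := by
  rw [IsPrimitive.Int.dvd_iff_map_cast_dvd_map_cast _ _ hA]
  refine ((IsPrimitive.Int.irreducible_iff_irreducible_map_cast hA).mp hAirr).dvd_iff_aeval_eq_zero
    (b := x) ?_ |>.mp ?_
  · rwa [← algebraMap_int_eq, aeval_map_algebraMap]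
  · rwa [← algebraMap_int_eq, aeval_map_algebraMap]

theorem mul_ne_one_of_mem_adjoin {F : Type*} [Field F] [CharZero F] {α : F} {A : ℤ[X]}
    (hA : A.IsPrimitive) (hAirr : Irreducible A) (hAα : aeval α A = 0)
    (hcoeff : |A.coeff 0| ≠ 1) {y : F} (hy : y ∈ Algebra.adjoin ℤ {α}) : α * y ≠ 1 := by
  intro h
  rw [Algebra.adjoin_singleton_eq_range_aeval] at hy
  obtain ⟨g, rfl⟩ := hy
  have hdvd : A ∣ X * g - 1 :=
    hA.dvd_of_aeval_eq_zero hAirr hAα (by simpa [sub_eq_zero] using h)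
  have : A.coeff 0 ∣ -1 := by
    obtain ⟨c, hc⟩ := hdvd
    exact ⟨c.coeff 0, by simpa [mul_coeff_zero] using congrArg (coeff · 0) hc⟩
  exact hcoeff (Int.isUnit_iff_abs_eq.mp (isUnit_of_dvd_one (dvd_neg.mp this)))

section Denominators

variable {F : Type*} [Field F] [CharZero F] {α : F}

theorem exists_intCast_mul_mem_adjoin (hgen : Algebra.adjoin ℚ {α} = ⊤) (x : F) :
    ∃ m : ℤ, m ≠ 0 ∧ (m : F) * x ∈ Algebra.adjoin ℤ {α} := by
  have hx : x ∈ Submodule.span ℚ (Submonoid.closure {α} : Set F) := by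
    rw [← Algebra.adjoin_eq_span, hgen]
    trivial
  obtain ⟨y, hy, ⟨m, hm⟩, rfl⟩ :=
    (IsLocalization.mem_span_iff (R := ℤ) (nonZeroDivisors ℤ)).mp hx
  have hm0 : m ≠ 0 := nonZeroDivisors.ne_zero hm
  refine ⟨m, hm0, ?_⟩
  rw [← Subalgebra.mem_toSubmodule, Algebra.adjoin_eq_span]
  simpa [IsFractionRing.mk'_eq_div, Algebra.smul_def, hm0] using hy

theorem exists_intCast_mul_mem_of_fg (hgen : Algebra.adjoin ℚ {α} = ⊤)
    {Q : Submodule (Algebra.adjoin ℤ {α}) F} (hQ : Q.FG) :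
    ∃ m : ℤ, m ≠ 0 ∧ ∀ x ∈ Q, (m : F) * x ∈ Algebra.adjoin ℤ {α} := by
  induction Q, hQ using Submodule.fg_induction with
  | singleton x =>
    obtain ⟨m, hm, hmx⟩ := exists_intCast_mul_mem_adjoin hgen x
    refine ⟨m, hm, fun y hy => ?_⟩
    obtain ⟨r, rfl⟩ := Submodule.mem_span_singleton.mp hy
    rw [Subalgebra.smul_def, smul_eq_mul, mul_left_comm]
    exact mul_mem r.2 hmx
  | sup Q₁ Q₂ _ _ ih₁ ih₂ =>
    obtain ⟨m₁, hm₁, h₁⟩ := ih₁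
    obtain ⟨m₂, hm₂, h₂⟩ := ih₂
    refine ⟨m₁ * m₂, mul_ne_zero hm₁ hm₂, fun x hx => ?_⟩
    obtain ⟨y₁, hy₁, y₂, hy₂, rfl⟩ := Submodule.mem_sup.mp hx
    rw [show ((m₁ * m₂ : ℤ) : F) * (y₁ + y₂) = m₂ * (m₁ * y₁) + m₁ * (m₂ * y₂) by push_cast; ring]
    exact add_mem (mul_mem (intCast_mem _ _) (h₁ y₁ hy₁)) (mul_mem (intCast_mem _ _) (h₂ y₂ hy₂))

end Denominators

section AdjoinScalars

variable {O F : Type*} [CommRing O] [Field F] [Algebra O F]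

theorem Algebra.adjoin_int_le_adjoin (α : F) :
    Algebra.adjoin ℤ {α} ≤ (Algebra.adjoin O {α}).restrictScalars ℤ :=
  Algebra.adjoin_le (by simp)

theorem fg_span_range_algebraMap [Module.Finite ℤ O] (α : F) :
    (Submodule.span (Algebra.adjoin ℤ {α}) (Set.range (algebraMap O F))).FG := by
  have := ((Module.Finite.fg_top (R := ℤ) (M := O)).map
    ((Algebra.linearMap O F).restrictScalars ℤ)).span (A := Algebra.adjoin ℤ {α})
  convert this using 2
  ext
  simp

theorem Algebra.adjoin_toAddSubgroup_eq_span (α : F) :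
    (Algebra.adjoin O {α}).toSubring.toAddSubgroup =
      (Submodule.span (Algebra.adjoin ℤ {α}) (Set.range (algebraMap O F))).toAddSubgroup := by
  set P := Submodule.span (Algebra.adjoin ℤ {α}) (Set.range (algebraMap O F))
  have hPP : P * P ≤ P := by
    rw [Submodule.span_mul_span]
    refine Submodule.span_mono ?_
    rintro _ ⟨_, ⟨a, rfl⟩, _, ⟨b, rfl⟩, rfl⟩
    exact ⟨a * b, map_mul _ _ _⟩
  ext x
  simp only [Subring.mem_toAddSubgroup, Subalgebra.mem_toSubring, Submodule.mem_toAddSubgroup]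
  constructor
  · intro hx
    induction hx using Algebra.adjoin_induction with
    | mem x hx =>
      rw [Set.mem_singleton_iff.mp hx]
      have := Submodule.smul_mem P ⟨α, Algebra.self_mem_adjoin_singleton ℤ α⟩
        (Submodule.subset_span ⟨1, map_one _⟩)
      rwa [Subalgebra.smul_def, smul_eq_mul, mul_one] at this
    | algebraMap o => exact Submodule.subset_span ⟨o, rfl⟩
    | add x y _ _ hx hy => exact add_mem hx hy
    | mul x y _ _ hx hy => exact hPP (Submodule.mul_mem_mul hx hy)
  · intro hx
    induction hx using Submodule.span_induction with
    | mem x hx =>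
      obtain ⟨o, rfl⟩ := hx
      exact Subalgebra.algebraMap_mem _ o
    | zero => exact zero_mem _
    | add x y _ _ hx hy => exact add_mem hx hy
    | smul r x _ hx => exact mul_mem (Algebra.adjoin_int_le_adjoin α r.2) hx

theorem Subalgebra.toAddSubgroup_eq_one {R A : Type*} [CommRing R] [CommRing A] [Algebra R A]
    (S : Subalgebra R A) : S.toSubring.toAddSubgroup = (1 : Submodule S A).toAddSubgroup := by
  ext x
  simp [Submodule.mem_one]

end AdjoinScalars

section DigitModule

variable {F : Type} [Field F] {α : F} {D : Finset F}

theorem sub_mem_zmoduleAD {d d' : F} (hd : d ∈ D) (hd' : d' ∈ D) : d - d' ∈ zmoduleAD F α D :=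
  Submodule.mem_sInf.mpr fun _ hM => hM.1 d hd d' hd'

theorem mul_mem_zmoduleAD {r : F} (hr : r ∈ Zring F α) {z : F} (hz : z ∈ zmoduleAD F α D) :
    r * z ∈ zmoduleAD F α D := by
  induction hr using Algebra.adjoin_induction generalizing z with
  | mem u hu =>
    rw [Set.mem_singleton_iff.mp hu]
    exact Submodule.mem_sInf.mpr fun M hM => hM.2 z (Submodule.mem_sInf.mp hz M hM)
  | algebraMap n => simpa [zsmul_eq_mul] using Submodule.smul_mem _ n hz
  | add u v _ _ hu hv =>
    rw [add_mul]
    exact add_mem (hu hz) (hv hz)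
  | mul u v _ _ hu hv =>
    rw [mul_assoc]
    exact hu (hv hz)

theorem zmoduleAD_le_zring (hD : IsStandardDigitSet F α D) :
    zmoduleAD F α D ≤ Subalgebra.toSubmodule (Zring F α) :=
  sInf_le ⟨fun _ hd _ hd' => sub_mem (hD.1 hd) (hD.1 hd'),
    fun _ hx => (Zring F α).mul_mem (Algebra.self_mem_adjoin_singleton ℤ α) hx⟩

theorem exists_ne_zero_mem_zmoduleAD (hD : IsStandardDigitSet F α D)
    (hα : ∀ y ∈ Zring F α, α * y ≠ 1) : ∃ x ∈ zmoduleAD F α D, x ≠ 0 := by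
  obtain ⟨d₀, ⟨hd₀, y₀, hy₀, h₀⟩, -⟩ := hD.2 0 (zero_mem _)
  obtain ⟨d₁, ⟨hd₁, y₁, hy₁, h₁⟩, -⟩ := hD.2 1 (one_mem _)
  refine ⟨d₀ - d₁, sub_mem_zmoduleAD hd₀ hd₁, fun h => hα (y₁ - y₀) (sub_mem hy₁ hy₀) ?_⟩
  linear_combination -h₁ + h₀ + h

theorem relIndex_zmoduleAD_ne_zero [CharZero F] (hgen : Algebra.adjoin ℚ {α} = ⊤)
    {A : ℤ[X]} (hA : A.IsPrimitive) (hAα : aeval α A = 0) {x : F}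
    (hx : x ∈ zmoduleAD F α D) (hx0 : x ≠ 0) :
    (zmoduleAD F α D).toAddSubgroup.relIndex (Zring F α).toSubring.toAddSubgroup ≠ 0 := by
  obtain ⟨m, hm, hmx⟩ := exists_intCast_mul_mem_adjoin hgen x⁻¹
  have : Finite (Zring F α ⧸ Ideal.span {(m : Zring F α)}) :=
    finite_quotient_adjoin_span_intCast hA hAα hm
  rw [Subalgebra.toAddSubgroup_eq_one]
  refine Submodule.relIndex_ne_zero_of_zsmul_mem (m := m) ⟨{1}, by simp [Submodule.one_eq_span]⟩
    fun y hy => ?_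
  obtain ⟨y, rfl⟩ := Submodule.mem_one.mp hy
  rw [zsmul_eq_mul]
  change (m : F) * y ∈ zmoduleAD F α D
  rw [show (m : F) * y = y * (m * x⁻¹) * x by field_simp]
  exact mul_mem_zmoduleAD (mul_mem y.2 hmx) hx

end DigitModule

/-- `ℤ[α]` is an additive subgroup of finite index of `𝒪[α]`,
and `𝔷 = ℤ⟨α,𝒟⟩` is an additive subgroup of finite index of `ℤ[α]`. -/
theorem zring_finite_index
    (α : K) (A : Polynomial ℤ)
    (hgen : Algebra.adjoin ℚ {α} = ⊤)
    (hAroot : Polynomial.aeval α A = 0)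
    (hAirr : Irreducible A)
    (hAexp : ∀ z : ℂ, Polynomial.aeval z A = 0 → 1 < ‖z‖)
    (D : Finset K) (hD : IsStandardDigitSet K α D) :
    ((Zring K α).toSubring.toAddSubgroup ≤
        (Algebra.adjoin (𝓞 K) {α}).toSubring.toAddSubgroup ∧
      (Zring K α).toSubring.toAddSubgroup.relIndex
        (Algebra.adjoin (𝓞 K) {α}).toSubring.toAddSubgroup ≠ 0) ∧
    ((zmoduleAD K α D).toAddSubgroup ≤ (Zring K α).toSubring.toAddSubgroup ∧
      (zmoduleAD K α D).toAddSubgroup.relIndex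
        (Zring K α).toSubring.toAddSubgroup ≠ 0) := by
  have hdeg : A.natDegree ≠ 0 :=
    (natDegree_pos_of_aeval_root hAirr.ne_zero hAroot fun n hn => by simpa using hn).ne'
  have hA : A.IsPrimitive := hAirr.isPrimitive hdeg
  refine ⟨⟨fun x hx => Algebra.adjoin_int_le_adjoin α hx, ?_⟩,
    fun x hx => zmoduleAD_le_zring hD hx, ?_⟩
  · have hP := fg_span_range_algebraMap (O := 𝓞 K) α
    obtain ⟨m, hm, hmP⟩ := exists_intCast_mul_mem_of_fg hgen hP
    have := finite_quotient_adjoin_span_intCast hA hAroot hm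
    rw [Algebra.adjoin_toAddSubgroup_eq_span]
    exact Submodule.relIndex_ne_zero_of_zsmul_mem (m := m) hP fun x hx => by
      rw [zsmul_eq_mul]
      exact hmP x hx
  · obtain ⟨x, hx, hx0⟩ := exists_ne_zero_mem_zmoduleAD hD fun y =>
      mul_ne_one_of_mem_adjoin hA hAirr hAroot (one_lt_abs_coeff_zero hdeg hAexp).ne'
    exact relIndex_zmoduleAD_ne_zero hgen hA hAroot hx hx0
end
end

section
/- For each x ∈ ℤ[α], the intersective tile satisfies the set equation 𝒢(x) = ⋃_{y ∈ T_α^{−1}(x)} α^{−1}·𝒢(y), where the union is over all y ∈ ℤ[α] with T_α(y) = x and α^{−1}· denotes coordinatewise multiplication by α^{−1}. -/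
/-!
Setup (following Steiner–Thuswaldner, "Rational self-affine tiles"):
`K` is a number field generated over `ℚ` by an expanding algebraic number `α`
whose primitive minimal polynomial is `A ∈ ℤ[X]` (encoded by: `A` irreducible in
`ℤ[X]`, `A(α) = 0`, and every complex root of `A` has absolute value `> 1`).
The representation space is `𝕂_α = 𝕂_∞ × ∏_{𝔭 ∣ 𝔟} K_𝔭`, where `𝕂_∞` is the
mixed space `ℝ^r × ℂ^s` of `K` and the product runs over the finite places with
`|α|_𝔭 > 1` (the primes dividing the denominator ideal `𝔟` of `α`).
-/

open NumberField MeasureTheory Polynomial IsDedekindDomain Filter Topology Set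
open scoped Classical

noncomputable section

variable (K : Type) [Field K] [NumberField K]

/-- The intersective tile `𝒢(x)`, regarded as a subset of `𝕂_α`. -/
def GtileA (α : K) (D : Finset K) (x : K) : Set (KA K α) :=
  {z | z - PhiA K α x ∈ Ztile K α D ∧ z.2 = 0}

/-!
Shifting a digit sequence by one place gives the set equation `α·𝓕 = ⋃_{d ∈ 𝒟} (𝓕 + Φ_α(d))`.
Hence `z - Φ_α(x) ∈ 𝓕` iff `Φ_α(α)·z - Φ_α(αx + d) ∈ 𝓕` for some digit `d`; and since `Φ_α(α)` is
a unit, multiplication by it preserves the vanishing of the coordinates at the places `𝔭 ∣ 𝔟`.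
-/

theorem Polynomial.ne_zero_of_aeval_eq_zero_of_roots_one_lt_norm {R : Type*} [CommRing R]
    [CharZero R] {A : ℤ[X]} {α : R} (hAroot : aeval α A = 0)
    (hAexp : ∀ z : ℂ, aeval z A = 0 → 1 < ‖z‖) : α ≠ 0 := by
  rintro rfl
  have hcoeff : A.coeff 0 = 0 := by
    rwa [← coeff_zero_eq_aeval_zero', eq_intCast, Int.cast_eq_zero] at hAroot
  have h := hAexp 0 (by rw [← coeff_zero_eq_aeval_zero', hcoeff, map_zero])
  norm_num at h

theorem Finset.sum_range_succ_mul_pow_succ {R : Type*} [CommSemiring R] (f : ℕ → R) (c : R)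
    (N : ℕ) :
    ∑ k ∈ range (N + 1), f k * c ^ (k + 1) =
      c * (f 0 + ∑ k ∈ range N, f (k + 1) * c ^ (k + 1)) := by
  rw [sum_range_succ', mul_add, mul_sum, add_comm]
  congr 1
  · ring
  · exact sum_congr rfl fun k _ => by ring

section DigitExpansions

variable {ι E : Type*} [CommRing E] [TopologicalSpace E]

def digitExpansions (φ : ι → E) (c : E) (D : Set ι) : Set E :=
  {z | ∃ d : ℕ → ι, (∀ k, d k ∈ D) ∧
    Tendsto (fun N => ∑ k ∈ Finset.range N, φ (d k) * c ^ (k + 1)) atTop (𝓝 z)}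

theorem mem_digitExpansions_iff [IsTopologicalRing E] {φ : ι → E} {c u : E} (hcu : u * c = 1)
    {D : Set ι} {z : E} :
    z ∈ digitExpansions φ c D ↔ ∃ i ∈ D, u * z - φ i ∈ digitExpansions φ c D := by
  constructor
  · rintro ⟨d, hd, hz⟩
    refine ⟨d 0, hd 0, fun k => d (k + 1), fun k => hd (k + 1), ?_⟩
    have hshift := (((tendsto_add_atTop_iff_nat 1).2 hz).const_mul u).sub_const (φ (d 0))
    refine hshift.congr fun N => ?_
    rw [Finset.sum_range_succ_mul_pow_succ, ← mul_assoc, hcu, one_mul, add_sub_cancel_left]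
  · rintro ⟨i, hi, d, hd, hw⟩
    refine ⟨fun k => Nat.casesOn (motive := fun _ => ι) k i d,
      fun k => by cases k; exacts [hi, hd _], ?_⟩
    rw [← tendsto_add_atTop_iff_nat 1]
    have hcons := (hw.const_add (φ i)).const_mul c
    rw [add_sub_cancel, ← mul_assoc, mul_comm c u, hcu, one_mul] at hcons
    exact hcons.congr fun N => (Finset.sum_range_succ_mul_pow_succ _ c N).symm

end DigitExpansions

def phiARingHom (α : K) : K →+* KA K α :=
  (mixedEmbedding K).prod
    (RingHom.pi fun v : denomPlaces K α => algebraMap K (v.1.adicCompletion K))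

theorem coe_phiARingHom (α : K) : ⇑(phiARingHom K α) = PhiA K α := rfl

theorem PhiA_mul_PhiA_inv {α : K} (hα : α ≠ 0) : PhiA K α α * PhiA K α α⁻¹ = 1 := by
  rw [← coe_phiARingHom, ← map_mul, mul_inv_cancel₀ hα, map_one]

theorem Ztile_eq_digitExpansions (α : K) (D : Finset K) :
    Ztile K α D = digitExpansions (PhiA K α) (PhiA K α α⁻¹) D := by
  simp only [Ztile, digitExpansions, Finset.mem_coe, ← coe_phiARingHom, map_mul, map_pow]

theorem mem_Ztile_iff {α : K} (hα : α ≠ 0) {D : Finset K} {z : KA K α} :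
    z ∈ Ztile K α D ↔ ∃ d ∈ D, PhiA K α α * z - PhiA K α d ∈ Ztile K α D := by
  rw [Ztile_eq_digitExpansions]
  exact mem_digitExpansions_iff (PhiA_mul_PhiA_inv K hα)

theorem GtileA_eq_iUnion_image {α : K} (hα : α ≠ 0) (D : Finset K) (x : K) :
    GtileA K α D x =
      ⋃ d ∈ D, (fun z => PhiA K α α⁻¹ * z) '' GtileA K α D (α * x + d) := by
  have hinv : PhiA K α α⁻¹ * PhiA K α α = 1 := by rw [mul_comm, PhiA_mul_PhiA_inv K hα]
  have himage (S : Set (KA K α)) :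
      (fun z => PhiA K α α⁻¹ * z) '' S = (fun z => PhiA K α α * z) ⁻¹' S :=
    congrFun (image_eq_preimage_of_inverse
      (fun z => by rw [← mul_assoc, PhiA_mul_PhiA_inv K hα, one_mul])
      (fun z => by rw [← mul_assoc, hinv, one_mul])) S
  have hunit : IsUnit (PhiA K α α).2 :=
    (isUnit_iff_exists_inv.2 ⟨_, PhiA_mul_PhiA_inv K hα⟩).map (RingHom.snd _ _)
  have hshift (z : KA K α) (d : K) :
      PhiA K α α * (z - PhiA K α x) - PhiA K α d = PhiA K α α * z - PhiA K α (α * x + d) := by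
    simp only [← coe_phiARingHom, map_add, map_mul]
    ring
  ext z
  simp only [himage, GtileA, mem_iUnion, mem_preimage, mem_ofPred_eq, exists_prop]
  rw [mem_Ztile_iff K hα, Prod.snd_mul, hunit.mul_right_eq_zero]
  simp only [hshift, ← and_assoc, exists_and_right]

/-- `T_α y = x` means `y = αx + d` for a digit `d`, which is how `T_α⁻¹(x)` is written. -/
theorem intersective_tile_set_equation
    (α : K) (A : Polynomial ℤ)
    (hAroot : Polynomial.aeval α A = 0)
    (hAexp : ∀ z : ℂ, Polynomial.aeval z A = 0 → 1 < ‖z‖)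
    (D : Finset K) (hD : IsStandardDigitSet K α D) :
    ∀ x ∈ Zring K α,
      GtileA K α D x =
        ⋃ y ∈ {y : K | y ∈ Zring K α ∧ ∃ d ∈ D, y = α * x + d},
          (fun z => PhiA K α α⁻¹ * z) '' GtileA K α D y := by
  intro x hx
  have hpreimage : {y : K | y ∈ Zring K α ∧ ∃ d ∈ D, y = α * x + d} = (α * x + ·) '' D := by
    ext y
    constructor
    · rintro ⟨-, d, hd, rfl⟩
      exact ⟨d, hd, rfl⟩
    · rintro ⟨d, hd, rfl⟩
      exact ⟨add_mem (mul_mem (Algebra.self_mem_adjoin_singleton ℤ α) hx) (hD.1 hd), d, hd, rfl⟩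
  rw [hpreimage, biUnion_image, Finset.set_biUnion_coe,
    GtileA_eq_iUnion_image K (ne_zero_of_aeval_eq_zero_of_roots_one_lt_norm hAroot hAexp)]
end
end

section
/- The ℤ-module Λ_{α,0} = ℤ[α] ∩ α^{−1}ℤ[α⁻¹] is generated over ℤ by the elements w_0, w_1, …, w_{n−1}, where w_0 = a_n and w_i = α w_{i−1} + a_{n−i} for 1 ≤ i ≤ n−1. -/
/-!
Setup (following Steiner–Thuswaldner, "Rational self-affine tiles"):
`K` is a number field generated over `ℚ` by an expanding algebraic number `α`
whose primitive minimal polynomial is `A ∈ ℤ[X]` (encoded by: `A` irreducible in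
`ℤ[X]`, `A(α) = 0`, and every complex root of `A` has absolute value `> 1`).
The representation space is `𝕂_α = 𝕂_∞ × ∏_{𝔭 ∣ 𝔟} K_𝔭`, where `𝕂_∞` is the
mixed space `ℝ^r × ℂ^s` of `K` and the product runs over the finite places with
`|α|_𝔭 > 1` (the primes dividing the denominator ideal `𝔟` of `α`).
-/

open NumberField MeasureTheory Polynomial IsDedekindDomain Filter Topology Set
open scoped Classical

noncomputable section

variable (K : Type) [Field K] [NumberField K]

/-!
Write `u_t = (A div X^t)(α) = ∑_{j ≥ t} a_j α^{j-t}`, so that `w_i = u_{n-i}` and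
`u_t = α u_{t+1} + a_t`. Reading this recursion as `α u_{t+1} = α⁻¹ (α u_t) - a_t` shows
inductively that every `u_t` with `t ≥ 1` lies in `α⁻¹ℤ[α⁻¹]`.

Conversely, if `x = B(α)` and `α x ∈ ℤ[α⁻¹]`, then `α^d x = C(α)` for some `C` with `deg C < d`.
By Gauss's lemma `A` divides `X^d B - C`, say `X^d B = A Q + C`, hence `B = (A Q) div X^d`.
Each monomial of `Q` contributes `(A X^m) div X^d`, which is `A X^{m-d}` (vanishing at `α`) or
`A div X^{d-m}`, whose value at `α` is some `u_t`.
-/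

namespace Polynomial

section Semiring

variable {R : Type*} [Semiring R]

theorem coeff_divX_iterate (p : R[X]) (k j : ℕ) : (divX^[k] p).coeff j = p.coeff (j + k) := by
  induction k generalizing p with
  | zero => rfl
  | succ k ih => rw [Function.iterate_succ_apply, ih, coeff_divX, Nat.add_assoc]

theorem divX_iterate_add (p q : R[X]) (k : ℕ) :
    divX^[k] (p + q) = divX^[k] p + divX^[k] q := by
  ext j
  simp [coeff_divX_iterate]

theorem divX_iterate_C_mul (a : R) (p : R[X]) (k : ℕ) : divX^[k] (C a * p) = C a * divX^[k] p := by
  ext j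
  simp [coeff_divX_iterate]

theorem divX_iterate_X_pow_mul (p : R[X]) (k : ℕ) : divX^[k] (X ^ k * p) = p := by
  ext j
  rw [coeff_divX_iterate, coeff_X_pow_mul]

theorem divX_iterate_eq_zero {p : R[X]} {k : ℕ} (h : p.natDegree < k) : divX^[k] p = 0 := by
  ext j
  rw [coeff_divX_iterate, coeff_zero]
  exact coeff_eq_zero_of_natDegree_lt (by omega)

theorem divX_iterate_natDegree (p : R[X]) : divX^[p.natDegree] p = C p.leadingCoeff := by
  ext j
  rw [coeff_divX_iterate, coeff_C]
  split_ifs with hj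
  · rw [hj, zero_add, leadingCoeff]
  · exact coeff_eq_zero_of_natDegree_lt (by omega)

end Semiring

theorem aeval_divX_iterate_eq_mul_add {R S : Type*} [CommSemiring R] [CommSemiring S]
    [Algebra R S] (x : S) (p : R[X]) (k : ℕ) :
    aeval x (divX^[k] p) = x * aeval x (divX^[k + 1] p) + algebraMap R S (p.coeff k) := by
  conv_lhs => rw [← X_mul_divX_add (divX^[k] p)]
  rw [Function.iterate_succ_apply', coeff_divX_iterate, zero_add, map_add, map_mul, aeval_X,
    aeval_C]

end Polynomial

open Polynomial

theorem Irreducible.int_dvd_of_aeval_eq_zero {L : Type*} [Field L] [CharZero L] {A P : ℤ[X]}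
    {α : L} (hA : Irreducible A) (hAα : aeval α A = 0) (hPα : aeval α P = 0) : A ∣ P := by
  have hdeg : A.natDegree ≠ 0 := by
    intro h
    rw [eq_C_of_natDegree_eq_zero h, aeval_C, map_eq_zero_iff _ (algebraMap ℤ L).injective_int,
      ← C_eq_zero, ← eq_C_of_natDegree_eq_zero h] at hAα
    exact hA.ne_zero hAα
  have hprim := hA.isPrimitive hdeg
  have hirr := (hprim.irreducible_iff_irreducible_map_fraction_map (K := ℚ)).mp hA
  refine hprim.dvd_of_fraction_map_dvd_fraction_map (K := ℚ) ?_
  rw [← hirr.dvd_iff_aeval_eq_zero (b := α) (by rwa [aeval_map_algebraMap]),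
    aeval_map_algebraMap, hPα]

section Generators

variable {L : Type*} {α : L} {A : ℤ[X]}

section CommRing

variable [CommRing L]

theorem aeval_divX_iterate_mem_span (hAα : aeval α A = 0) (t : ℕ) :
    aeval α (divX^[t] A) ∈
      Submodule.span ℤ ((fun s ↦ aeval α (divX^[s] A)) '' Icc 1 A.natDegree) := by
  rcases Nat.eq_zero_or_pos t with rfl | ht
  · rw [Function.iterate_zero_apply, hAα]
    exact zero_mem _
  rcases le_or_gt t A.natDegree with htn | htn
  · exact Submodule.subset_span ⟨t, ⟨ht, htn⟩, rfl⟩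
  · rw [divX_iterate_eq_zero htn, map_zero]
    exact zero_mem _

theorem aeval_divX_iterate_mul_mem_span (hAα : aeval α A = 0) (Q : ℤ[X]) (d : ℕ) :
    aeval α (divX^[d] (A * Q)) ∈
      Submodule.span ℤ ((fun s ↦ aeval α (divX^[s] A)) '' Icc 1 A.natDegree) := by
  induction Q using Polynomial.induction_on' generalizing d with
  | add P Q hP hQ =>
    rw [mul_add, divX_iterate_add, map_add]
    exact add_mem (hP d) (hQ d)
  | monomial m c =>
    rw [← C_mul_X_pow_eq_monomial, show A * (C c * X ^ m) = C c * (X ^ m * A) by ring,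
      divX_iterate_C_mul, map_mul, aeval_C, ← Algebra.smul_def]
    refine Submodule.smul_mem _ _ ?_
    rcases le_or_gt m d with hmd | hdm
    · obtain ⟨k, rfl⟩ := Nat.exists_eq_add_of_le hmd
      rw [add_comm, Function.iterate_add_apply, divX_iterate_X_pow_mul]
      exact aeval_divX_iterate_mem_span hAα k
    · obtain ⟨k, rfl⟩ := Nat.exists_eq_add_of_lt hdm
      rw [show X ^ (d + k + 1) * A = X ^ d * (X ^ (k + 1) * A) by ring, divX_iterate_X_pow_mul,
        map_mul, hAα, mul_zero]
      exact zero_mem _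

theorem image_Iio_natDegree_eq_of_recurrence {w : ℕ → L}
    (hw0 : w 0 = (A.coeff A.natDegree : ℤ))
    (hwrec : ∀ i : ℕ, i + 1 < A.natDegree →
      w (i + 1) = α * w i + (A.coeff (A.natDegree - (i + 1)) : ℤ)) :
    w '' Iio A.natDegree = (fun t ↦ aeval α (divX^[t] A)) '' Icc 1 A.natDegree := by
  have hw : ∀ i < A.natDegree, w i = aeval α (divX^[A.natDegree - i] A) := by
    intro i hi
    induction i with
    | zero => rw [hw0, Nat.sub_zero, divX_iterate_natDegree, aeval_C, eq_intCast, leadingCoeff]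
    | succ i ih =>
      rw [hwrec i hi, ih (by omega), aeval_divX_iterate_eq_mul_add α A (A.natDegree - (i + 1)),
        show A.natDegree - (i + 1) + 1 = A.natDegree - i by omega, eq_intCast]
  ext x
  constructor
  · rintro ⟨i, hi : i < A.natDegree, rfl⟩
    exact ⟨A.natDegree - i, ⟨by omega, by omega⟩, (hw i hi).symm⟩
  · rintro ⟨t, ⟨ht1, htn⟩, rfl⟩
    refine ⟨A.natDegree - t, mem_Iio.mpr (by omega), ?_⟩
    rw [hw _ (by omega), Nat.sub_sub_self htn]

end CommRing

section Field

variable [Field L]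

def lambdaZero (α : L) : Submodule ℤ L :=
  Subalgebra.toSubmodule (Algebra.adjoin ℤ {α}) ⊓
    (Subalgebra.toSubmodule (Algebra.adjoin ℤ {α⁻¹})).comap (LinearMap.mulLeft ℤ α)

theorem mem_lambdaZero {x : L} :
    x ∈ lambdaZero α ↔ x ∈ Algebra.adjoin ℤ {α} ∧ α * x ∈ Algebra.adjoin ℤ {α⁻¹} :=
  Iff.rfl

theorem exists_pow_mul_eq_aeval_of_mem_adjoin_inv (hα : α ≠ 0) {y : L}
    (hy : y ∈ Algebra.adjoin ℤ {α⁻¹}) :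
    ∃ (N : ℕ) (C : ℤ[X]), C.natDegree ≤ N ∧ α ^ N * y = aeval α C := by
  rw [Algebra.adjoin_singleton_eq_range_aeval] at hy
  obtain ⟨D, rfl⟩ := (AlgHom.mem_range _).mp hy
  refine ⟨D.natDegree, reflect D.natDegree D, natDegree_reflect_le.trans (max_self _).le, ?_⟩
  let := invertibleOfNonzero (inv_ne_zero hα)
  have h := eval₂_reflect_mul_pow (algebraMap ℤ L) α⁻¹ D.natDegree D le_rfl
  rw [invOf_eq_inv, inv_inv] at h
  rw [aeval_def, aeval_def, ← h, mul_comm, mul_assoc, ← mul_pow, inv_mul_cancel₀ hα, one_pow,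
    mul_one]

theorem aeval_divX_iterate_succ_mem_lambdaZero (hα : α ≠ 0) (hAα : aeval α A = 0) (t : ℕ) :
    aeval α (divX^[t + 1] A) ∈ lambdaZero α := by
  refine mem_lambdaZero.mpr ⟨aeval_mem_adjoin_singleton ℤ α, ?_⟩
  induction t with
  | zero =>
    have h := aeval_divX_iterate_eq_mul_add α A 0
    rw [Function.iterate_zero_apply, hAα] at h
    rw [show α * _ = -algebraMap ℤ L (A.coeff 0) by linear_combination -h]
    exact neg_mem (Subalgebra.algebraMap_mem _ _)
  | succ t ih =>
    have h := aeval_divX_iterate_eq_mul_add α A (t + 1)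
    rw [show α * _ = α⁻¹ * (α * aeval α (divX^[t + 1] A)) - algebraMap ℤ L (A.coeff (t + 1)) by
      rw [inv_mul_cancel_left₀ hα]; linear_combination -h]
    exact sub_mem (mul_mem (Algebra.self_mem_adjoin_singleton ℤ _) ih)
      (Subalgebra.algebraMap_mem _ _)

theorem span_divX_iterate_le_lambdaZero (hα : α ≠ 0) (hAα : aeval α A = 0) :
    Submodule.span ℤ ((fun t ↦ aeval α (divX^[t] A)) '' Icc 1 A.natDegree) ≤ lambdaZero α := by
  rw [Submodule.span_le]
  rintro _ ⟨t, ⟨ht, -⟩, rfl⟩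
  obtain ⟨s, rfl⟩ := Nat.exists_eq_add_of_le' ht
  exact aeval_divX_iterate_succ_mem_lambdaZero hα hAα s

theorem lambdaZero_le_span_divX_iterate [CharZero L] (hα : α ≠ 0) (hA : Irreducible A)
    (hAα : aeval α A = 0) :
    lambdaZero α ≤ Submodule.span ℤ ((fun t ↦ aeval α (divX^[t] A)) '' Icc 1 A.natDegree) := by
  intro x hx
  obtain ⟨hxα, hαx⟩ := mem_lambdaZero.mp hx
  rw [Algebra.adjoin_singleton_eq_range_aeval] at hxα
  obtain ⟨B, rfl⟩ := (AlgHom.mem_range _).mp hxα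
  obtain ⟨N, C, hC, hNC⟩ := exists_pow_mul_eq_aeval_of_mem_adjoin_inv hα hαx
  obtain ⟨Q, hQ⟩ : A ∣ X ^ (N + 1) * B - C := by
    refine hA.int_dvd_of_aeval_eq_zero hAα ?_
    rw [map_sub, map_mul, map_pow, aeval_X, pow_succ, mul_assoc]
    exact sub_eq_zero.mpr hNC
  have hB := congrArg (divX^[N + 1]) (sub_eq_iff_eq_add.mp hQ)
  rw [divX_iterate_X_pow_mul, divX_iterate_add, divX_iterate_eq_zero (p := C) (by omega),
    add_zero] at hB
  rw [hB]
  exact aeval_divX_iterate_mul_mem_span hAα Q (N + 1)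

end Field

end Generators

theorem lambdaSet_zero_eq_lambdaZero {L : Type} [Field L] {α : L} (hα : α ≠ 0) :
    LambdaSet L α 0 = lambdaZero α := by
  ext x
  simp only [LambdaSet, zero_sub, zpow_neg_one, Set.mem_ofPred_eq, SetLike.mem_coe,
    mem_lambdaZero, Zring, Zinv]
  refine and_congr_right fun _ ↦ ⟨?_, fun h ↦ ⟨_, h, (inv_mul_cancel_left₀ hα x).symm⟩⟩
  rintro ⟨y, hy, rfl⟩
  rwa [mul_inv_cancel_left₀ hα]

theorem lambda_zero_generators
    (α : K) (A : Polynomial ℤ)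
    (hAroot : Polynomial.aeval α A = 0)
    (hAirr : Irreducible A)
    (hAexp : ∀ z : ℂ, Polynomial.aeval z A = 0 → 1 < ‖z‖) :
    ∀ w : ℕ → K, w 0 = (A.coeff A.natDegree : ℤ) →
      (∀ i : ℕ, i + 1 < A.natDegree →
        w (i + 1) = α * w i + (A.coeff (A.natDegree - (i + 1)) : ℤ)) →
      LambdaSet K α 0 = ↑(Submodule.span ℤ (w '' Set.Iio A.natDegree)) := by
  intro w hw0 hwrec
  have hα : α ≠ 0 := by
    rintro rfl
    have h0 : A.coeff 0 = 0 := by simpa [← coeff_zero_eq_aeval_zero'] using hAroot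
    exact absurd (hAexp 0 (by simp [← coeff_zero_eq_aeval_zero', h0])) (by norm_num)
  rw [lambdaSet_zero_eq_lambdaZero hα, image_Iio_natDegree_eq_of_recurrence hw0 hwrec,
    le_antisymm (lambdaZero_le_span_divX_iterate hα hAirr hAroot)
      (span_divX_iterate_le_lambdaZero hα hAroot)]
end
end
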